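/- Let α ≥ 0, β, γ > 0 and let X ⊆ ℝ × ℝ. Suppose F : ℝ × ℝ → ℝ is differentiable on X and there are constants m, M > 0 such that at every point of X the partial derivative Fθ of F with respect to its first argument satisfies Fθ < 0 and |Fθ| ≥ m, while the partial derivative Fd of F with respect to its second argument satisfies |Fd| ≤ M. Set c = (β·M)/(γ·m). Then for any functions θ, d : ℝ → ℝ satisfying the closed-loop dynamics at a time t (θ has derivative γ·F(θ(t),d(t)) at t and d has derivative β·exp(−α·F(θ(t),d(t))²)·sin(θ(t)) at t) with (θ(t), d(t)) ∈ X and |F(θ(t), d(t))| > c, the function V : s ↦ (1/2)·F(θ(s),d(s))² has strictly negative derivative at t. -/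

import Mathlib

/-!
Along a trajectory, `V' = F · (F_θ θ' + F_d d') = γ F_θ F² + F · F_d · β e^{-αF²} sin θ`.
The first term is at most `-γ m F²` and the second at most `β M |F|`, because the feedback gain
`β e^{-αF²} sin θ` is bounded by `β`. Hence `V' ≤ |F| (β M - γ m |F|)`, which is negative as soon
as `|F| > β M / (γ m)`.
-/

open Real

lemma ContinuousLinearMap.apply_mk_eq_mul_add_mul (L : ℝ × ℝ →L[ℝ] ℝ) (u v : ℝ) :
    L (u, v) = u * L (1, 0) + v * L (0, 1) := by
  have : ((u, v) : ℝ × ℝ) = u • ((1 : ℝ), (0 : ℝ)) + v • ((0 : ℝ), (1 : ℝ)) := by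
    simp
  rw [this, map_add, map_smul, map_smul, smul_eq_mul, smul_eq_mul]

lemma HasFDerivAt.comp_hasDerivAt_prodMk {F : ℝ × ℝ → ℝ} {L : ℝ × ℝ →L[ℝ] ℝ}
    {x y : ℝ → ℝ} {x' y' t : ℝ} (hF : HasFDerivAt F L (x t, y t))
    (hx : HasDerivAt x x' t) (hy : HasDerivAt y y' t) :
    HasDerivAt (fun s => F (x s, y s)) (x' * L (1, 0) + y' * L (0, 1)) t := by
  rw [← L.apply_mk_eq_mul_add_mul]
  exact hF.comp_hasDerivAt t (hx.prodMk hy)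

lemma HasDerivAt.half_sq {g : ℝ → ℝ} {g' t : ℝ} (hg : HasDerivAt g g' t) :
    HasDerivAt (fun s => 1 / 2 * g s ^ 2) (g t * g') t :=
  ((hg.fun_pow 2).const_mul (1 / 2)).congr_deriv (by norm_num; ring)

lemma abs_mul_exp_neg_mul_sq_mul_sin_le {α β : ℝ} (hα : 0 ≤ α) (hβ : 0 ≤ β) (x y : ℝ) :
    |β * exp (-α * x ^ 2) * sin y| ≤ β := by
  have hexp : exp (-α * x ^ 2) ≤ 1 := exp_le_one_iff.mpr (by nlinarith [sq_nonneg x])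
  rw [abs_mul, abs_mul, abs_of_nonneg hβ, abs_of_pos (exp_pos _)]
  calc β * exp (-α * x ^ 2) * |sin y| ≤ β * 1 * 1 := by
        gcongr
        exact abs_sin_le_one y
    _ = β := by ring

lemma mul_mul_add_mul_neg {f a b e γ m β M : ℝ} (hγ : 0 < γ) (ha : a ≤ -m)
    (hb : |b| ≤ M) (he : |e| ≤ β) (hf : β * M < γ * m * |f|) :
    f * (γ * f * a + e * b) < 0 := by
  have hM : 0 ≤ M := (abs_nonneg b).trans hb
  have hβ : 0 ≤ β := (abs_nonneg e).trans he
  have hf0 : 0 < |f| := by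
    by_contra! h
    rw [le_antisymm h (abs_nonneg f), mul_zero] at hf
    linarith [mul_nonneg hβ hM]
  have hdrift : f * (γ * f * a) ≤ -(γ * m) * |f| ^ 2 := by
    rw [sq_abs]
    nlinarith [mul_nonneg hγ.le (sq_nonneg f)]
  have hcross : f * (e * b) ≤ β * M * |f| := by
    calc f * (e * b) ≤ |f| * (|e| * |b|) := by
          rw [← abs_mul, ← abs_mul]
          exact le_abs_self _
      _ ≤ |f| * (β * M) := by gcongr
      _ = β * M * |f| := by ring
  nlinarith [mul_lt_mul_of_pos_left hf hf0]

theorem stmt3_general (α β γ m M : ℝ) (hα : 0 ≤ α) (hβ : 0 < β) (hγ : 0 < γ)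
    (hm : 0 < m)
    (X : Set (ℝ × ℝ)) (F : ℝ × ℝ → ℝ) (Fder : ℝ × ℝ → (ℝ × ℝ →L[ℝ] ℝ))
    (hFdiff : ∀ p ∈ X, HasFDerivAt F (Fder p) p)
    (hFθneg : ∀ p ∈ X, Fder p (1, 0) < 0)
    (hFθm : ∀ p ∈ X, m ≤ |Fder p (1, 0)|)
    (hFdM : ∀ p ∈ X, |Fder p (0, 1)| ≤ M)
    (θ d : ℝ → ℝ) (t : ℝ)
    (hθ : HasDerivAt θ (γ * F (θ t, d t)) t)
    (hd : HasDerivAt d (β * Real.exp (-α * F (θ t, d t) ^ 2) * Real.sin (θ t)) t)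
    (hmem : (θ t, d t) ∈ X)
    (hbig : |F (θ t, d t)| > β * M / (γ * m)) :
    deriv (fun s => (1 / 2) * F (θ s, d s) ^ 2) t < 0 := by
  have hV := ((hFdiff _ hmem).comp_hasDerivAt_prodMk hθ hd).half_sq
  rw [hV.deriv]
  refine mul_mul_add_mul_neg (m := m) hγ ?_ (hFdM _ hmem)
    (abs_mul_exp_neg_mul_sq_mul_sin_le hα hβ.le _ _) ?_
  · have hm_le := hFθm _ hmem
    rw [abs_of_neg (hFθneg _ hmem)] at hm_le
    linarith
  · rw [gt_iff_lt, div_lt_iff₀ (by positivity)] at hbig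
    linarith

/-- Decrease of the Lyapunov-like function outside a sublevel
set.  With `α ≥ 0`, `β, γ > 0`, suppose `F` is differentiable at every point
of `X` with total derivative `Fder p` (partial derivatives `Fder p (1,0)` and
`Fder p (0,1)`), where `Fder p (1,0) < 0`, `|Fder p (1,0)| ≥ m` and
`|Fder p (0,1)| ≤ M` on `X` for constants `m, M > 0`.  Set `c = β·M/(γ·m)`.
Then for any solution of the closed-loop dynamics at time `t` with
`(θ t, d t) ∈ X` and `|F (θ t, d t)| > c`, the Lyapunov-like function
`V : s ↦ (1/2)·F(θ s, d s)²` has strictly negative derivative at `t`. -/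
theorem stmt3 (α β γ m M : ℝ) (hα : 0 ≤ α) (hβ : 0 < β) (hγ : 0 < γ)
    (hm : 0 < m) (hM : 0 < M)
    (X : Set (ℝ × ℝ)) (F : ℝ × ℝ → ℝ) (Fder : ℝ × ℝ → (ℝ × ℝ →L[ℝ] ℝ))
    (hFdiff : ∀ p ∈ X, HasFDerivAt F (Fder p) p)
    (hFθneg : ∀ p ∈ X, Fder p (1, 0) < 0)
    (hFθm : ∀ p ∈ X, m ≤ |Fder p (1, 0)|)
    (hFdM : ∀ p ∈ X, |Fder p (0, 1)| ≤ M)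
    (θ d : ℝ → ℝ) (t : ℝ)
    (hθ : HasDerivAt θ (γ * F (θ t, d t)) t)
    (hd : HasDerivAt d (β * Real.exp (-α * F (θ t, d t) ^ 2) * Real.sin (θ t)) t)
    (hmem : (θ t, d t) ∈ X)
    (hbig : |F (θ t, d t)| > β * M / (γ * m)) :
    deriv (fun s => (1 / 2) * F (θ s, d s) ^ 2) t < 0 :=
  stmt3_general α β γ m M hα hβ hγ hm X F Fder hFdiff hFθneg hFθm hFdM θ d t hθ hd hmem hbig
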